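/- arXiv:2407.04702 — 2 statements merged into one kernel-verified Lean document; each statement's English description precedes it below -/
import Mathlib

section
/- Let 0 ≤ a < b < c < d < 2π be four angles and let A, B, C, D be the corresponding points (cos·, sin·) on the unit circle. Then for every α > 0, 1/|AC|^α + 1/|BD|^α < 1/|AD|^α + 1/|BC|^α, where |XY| denotes Euclidean distance. -/
open Real

/-- Euclidean distance between the points at angles `s` and `t` on the unit circle. -/
noncomputable def circleDist (s t : ℝ) : ℝ :=
  Real.sqrt ((Real.cos s - Real.cos t) ^ 2 + (Real.sin s - Real.sin t) ^ 2)

/-!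
A chord subtending the angle `x ∈ [0, 2π]` has length `2 sin (x / 2)`, so each term of the
inequality is `φ x = (2 sin (x / 2)) ^ (-α)` at the angle between the two endpoints. Being a convex
decreasing function of the strictly concave chord length, `φ` is strictly convex on `(0, 2π)`.
The crossing angles `c - a` and `d - b` lie strictly between `c - b` and `d - a` and have the
same sum, so strict convexity gives `φ (c - a) + φ (d - b) < φ (c - b) + φ (d - a)`.
-/

open Set

theorem circleDist_eq_two_mul_abs_sin (s t : ℝ) :
    circleDist s t = 2 * |sin ((t - s) / 2)| := by
  have hcos := cos_two_mul' ((t - s) / 2)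
  rw [show 2 * ((t - s) / 2) = t - s by ring] at hcos
  have hsq : (cos s - cos t) ^ 2 + (sin s - sin t) ^ 2 = (2 * sin ((t - s) / 2)) ^ 2 := by
    nlinarith [cos_sub t s, sin_sq_add_cos_sq s, sin_sq_add_cos_sq t,
      sin_sq_add_cos_sq ((t - s) / 2)]
  rw [circleDist, hsq, sqrt_sq_eq_abs, abs_mul, abs_two]

theorem Real.convex_image_of_continuousOn {s : Set ℝ} (hs : Convex ℝ s) {f : ℝ → ℝ}
    (hf : ContinuousOn f s) : Convex ℝ (f '' s) :=
  Real.convex_iff_isPreconnected.2 ((Real.convex_iff_isPreconnected.1 hs).image f hf)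

theorem convexOn_rpow_of_nonpos {p : ℝ} (hp : p ≤ 0) :
    ConvexOn ℝ (Ioi 0) fun x : ℝ ↦ x ^ p := by
  have hlog : ConvexOn ℝ (Ioi 0) fun x ↦ (-p) • -log x :=
    strictConcaveOn_log_Ioi.concaveOn.neg.smul (neg_nonneg.2 hp)
  have himage : Convex ℝ ((fun x ↦ (-p) • -log x) '' Ioi 0) :=
    Real.convex_image_of_continuousOn (convex_Ioi 0)
      (ContinuousOn.const_smul (continuousOn_log.mono fun x hx ↦ (mem_Ioi.1 hx).ne').neg (-p))
  refine ((convexOn_exp.subset (subset_univ _) himage).comp hlog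
    (exp_monotone.monotoneOn _)).congr fun x hx ↦ ?_
  simp [rpow_def_of_pos (mem_Ioi.1 hx), mul_comm]

theorem strictConcaveOn_two_mul_sin_half :
    StrictConcaveOn ℝ (Icc 0 (2 * π)) fun x ↦ 2 * sin (x / 2) := by
  refine ⟨convex_Icc _ _, fun x hx y hy hxy a b ha hb hab ↦ ?_⟩
  have hx' : x / 2 ∈ Icc 0 π := ⟨by linarith [hx.1], by linarith [hx.2]⟩
  have hy' : y / 2 ∈ Icc 0 π := ⟨by linarith [hy.1], by linarith [hy.2]⟩
  have h := strictConcaveOn_sin_Icc.2 hx' hy' (by contrapose! hxy; linarith) ha hb hab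
  simp only [smul_eq_mul] at h ⊢
  rw [show (a * x + b * y) / 2 = a * (x / 2) + b * (y / 2) by ring]
  linarith

theorem strictConvexOn_two_mul_sin_half_rpow_neg {α : ℝ} (hα : 0 < α) :
    StrictConvexOn ℝ (Ioo 0 (2 * π)) fun x ↦ (2 * sin (x / 2)) ^ (-α) := by
  have hpos : (fun x ↦ 2 * sin (x / 2)) '' Ioo 0 (2 * π) ⊆ Ioi 0 := by
    rintro _ ⟨x, hx, rfl⟩
    exact mul_pos two_pos (sin_pos_of_pos_of_lt_pi (by linarith [hx.1]) (by linarith [hx.2]))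
  have hconv : Convex ℝ ((fun x ↦ 2 * sin (x / 2)) '' Ioo 0 (2 * π)) :=
    Real.convex_image_of_continuousOn (convex_Ioo _ _) (by fun_prop)
  exact ((convexOn_rpow_of_nonpos (neg_nonpos.2 hα.le)).subset hpos hconv).comp_strictConcaveOn
    (strictConcaveOn_two_mul_sin_half.subset Ioo_subset_Icc_self (convex_Ioo _ _))
    ((strictAntiOn_rpow_Ioi_of_exponent_neg (neg_neg_of_pos hα)).mono hpos)

theorem StrictConvexOn.add_lt_add_of_lt_of_lt {𝕜 : Type*} [Field 𝕜] [LinearOrder 𝕜]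
    [IsStrictOrderedRing 𝕜] {s : Set 𝕜} {f : 𝕜 → 𝕜} (hf : StrictConvexOn 𝕜 s f)
    {p q u v : 𝕜} (hp : p ∈ s) (hq : q ∈ s) (hpu : p < u) (huq : u < q) (huv : u + v = p + q) :
    f u + f v < f p + f q := by
  have hu := hf.secant_strict_mono_aux1 hp hq hpu huq
  have hv := hf.secant_strict_mono_aux1 hp hq (show p < v by linarith) (show v < q by linarith)
  refine lt_of_mul_lt_mul_left ?_ (sub_nonneg.2 (hpu.trans huq).le)
  linear_combination hu + hv + (f q - f p) * huv

theorem one_div_circleDist_rpow {s t : ℝ} (hst : s ≤ t) (hts : t - s ≤ 2 * π) (α : ℝ) :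
    1 / circleDist s t ^ α = (2 * sin ((t - s) / 2)) ^ (-α) := by
  have hsin : 0 ≤ sin ((t - s) / 2) := sin_nonneg_of_nonneg_of_le_pi (by linarith) (by linarith)
  rw [circleDist_eq_two_mul_abs_sin, abs_of_nonneg hsin, rpow_neg (by positivity), one_div]

theorem ptolemy_type_points (a b c d α : ℝ) (ha : 0 ≤ a) (hab : a < b) (hbc : b < c)
    (hcd : c < d) (hd : d < 2 * Real.pi) (hα : 0 < α) :
    1 / circleDist a c ^ α + 1 / circleDist b d ^ α <
      1 / circleDist a d ^ α + 1 / circleDist b c ^ α := by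
  have hsum := (strictConvexOn_two_mul_sin_half_rpow_neg hα).add_lt_add_of_lt_of_lt
    (p := c - b) (q := d - a) (u := c - a) (v := d - b) ⟨by linarith, by linarith⟩
    ⟨by linarith, by linarith⟩ (by linarith) (by linarith) (by ring)
  beta_reduce at hsum
  rw [one_div_circleDist_rpow (s := a) (t := c) (by linarith) (by linarith),
    one_div_circleDist_rpow (s := b) (t := d) (by linarith) (by linarith),
    one_div_circleDist_rpow (s := a) (t := d) (by linarith) (by linarith),
    one_div_circleDist_rpow (s := b) (t := c) (by linarith) (by linarith)]
  linarith
end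

section
/- Let 0 ≤ a < b < c < d < 2π and α > 0. Writing r(s,t) = 2 sin((t − s)/2) for the chord length between angles s < t with t − s < 2π, one has 1/r(a,c)^α + 1/r(b,d)^α < 1/r(a,d)^α + 1/r(b,c)^α. -/
/-!
The map θ ↦ r(θ)^(-α), with r(θ) = 2 sin(θ/2), is strictly convex on (0, 2π): it is the convex,
strictly decreasing function y ↦ y^(-α) of the strictly concave positive chord r. The arguments
c - a and d - b lie strictly between c - b and d - a and have the same sum, so strict convexity
gives r(c - a)^(-α) + r(d - b)^(-α) < r(c - b)^(-α) + r(d - a)^(-α).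
-/

open Real Set

theorem ConvexOn.comp_strictConcaveOn_of_mapsTo {𝕜 E α β : Type*} [Semiring 𝕜] [PartialOrder 𝕜]
    [AddCommMonoid E] [AddCommMonoid α] [PartialOrder α] [AddCommMonoid β] [PartialOrder β]
    [SMul 𝕜 E] [SMul 𝕜 α] [SMul 𝕜 β] {s : Set E} {t : Set β} {f : E → β} {g : β → α}
    (hg : ConvexOn 𝕜 t g) (hf : StrictConcaveOn 𝕜 s f) (hg' : StrictAntiOn g t)
    (hst : MapsTo f s t) : StrictConvexOn 𝕜 s (g ∘ f) :=
  ⟨hf.1, fun _ hx _ hy hxy _ _ ha hb hab =>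
    (hg' (hg.1 (hst hx) (hst hy) ha.le hb.le hab) (hst (hf.1 hx hy ha.le hb.le hab))
      (hf.2 hx hy hxy ha hb hab)).trans_le (hg.2 (hst hx) (hst hy) ha.le hb.le hab)⟩

theorem StrictConvexOn.add_lt_add_of_add_eq {s : Set ℝ} {f : ℝ → ℝ} (hf : StrictConvexOn ℝ s f)
    {u v x y : ℝ} (hu : u ∈ s) (hv : v ∈ s) (hx : x ∈ Ioo u v) (hxy : x + y = u + v) :
    f x + f y < f u + f v := by
  obtain rfl : y = u + v - x := by linarith
  have huv : u < v := hx.1.trans hx.2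
  have hvu : v - u ≠ 0 := (sub_pos.2 huv).ne'
  set p := (v - x) / (v - u)
  set q := (x - u) / (v - u)
  have hp : 0 < p := div_pos (by linarith [hx.2]) (sub_pos.2 huv)
  have hq : 0 < q := div_pos (by linarith [hx.1]) (sub_pos.2 huv)
  have hpq : p + q = 1 := by rw [← add_div, div_eq_one_iff_eq hvu]; ring
  have h₁ := hf.2 hu hv huv.ne hp hq hpq
  have h₂ := hf.2 hu hv huv.ne hq hp (by linarith)
  rw [show p • u + q • v = x by simp only [p, q, smul_eq_mul]; field_simp; ring] at h₁
  rw [show q • u + p • v = u + v - x by simp only [p, q, smul_eq_mul]; field_simp; ring] at h₂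
  simp only [smul_eq_mul] at h₁ h₂
  linear_combination h₁ + h₂ + (f u + f v) * hpq

theorem strictConvexOn_rpow_of_neg {p : ℝ} (hp : p < 0) :
    StrictConvexOn ℝ (Ioi 0) fun x : ℝ => x ^ p := by
  refine strictConvexOn_of_deriv2_pos' (convex_Ioi 0)
    (continuousOn_id.rpow_const fun x hx => Or.inl (ne_of_gt hx)) fun x hx => ?_
  rw [iter_deriv_rpow_const,
    show (descPochhammer ℝ 2).eval p = p * (p - 1) by simp [descPochhammer_succ_right]]
  exact mul_pos (mul_pos_of_neg_of_neg hp (by linarith)) (rpow_pos_of_pos hx _)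

noncomputable def chord (θ : ℝ) : ℝ := 2 * sin (θ / 2)

theorem chord_pos {θ : ℝ} (hθ : θ ∈ Ioo 0 (2 * π)) : 0 < chord θ :=
  mul_pos two_pos (sin_pos_of_pos_of_lt_pi (by linarith [hθ.1]) (by linarith [hθ.2]))

theorem strictConcaveOn_chord : StrictConcaveOn ℝ (Icc 0 (2 * π)) chord := by
  refine ⟨convex_Icc _ _, fun x hx y hy hxy a b ha hb hab => ?_⟩
  have h := strictConcaveOn_sin_Icc.2 (x := x / 2) (y := y / 2)
    ⟨by linarith [hx.1], by linarith [hx.2]⟩ ⟨by linarith [hy.1], by linarith [hy.2]⟩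
    (by contrapose! hxy; linarith) ha hb hab
  simp only [smul_eq_mul, chord] at h ⊢
  rw [show (a * x + b * y) / 2 = a * (x / 2) + b * (y / 2) by ring]
  linarith

theorem strictConvexOn_one_div_chord_rpow {α : ℝ} (hα : 0 < α) :
    StrictConvexOn ℝ (Ioo 0 (2 * π)) fun θ => 1 / chord θ ^ α := by
  have h := (strictConvexOn_rpow_of_neg (neg_lt_zero.2 hα)).convexOn.comp_strictConcaveOn_of_mapsTo
    (strictConcaveOn_chord.subset Ioo_subset_Icc_self (convex_Ioo _ _))
    (strictAntiOn_rpow_Ioi_of_exponent_neg (neg_lt_zero.2 hα)) fun _ => chord_pos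
  refine h.congr fun θ hθ => ?_
  simp [rpow_neg (chord_pos hθ).le]

theorem ptolemy_type_angles (a b c d α : ℝ) (ha : 0 ≤ a) (hab : a < b) (hbc : b < c)
    (hcd : c < d) (hd : d < 2 * Real.pi) (hα : 0 < α) :
    1 / (2 * Real.sin ((c - a) / 2)) ^ α + 1 / (2 * Real.sin ((d - b) / 2)) ^ α <
      1 / (2 * Real.sin ((d - a) / 2)) ^ α + 1 / (2 * Real.sin ((c - b) / 2)) ^ α := by
  have hcb : c - b ∈ Ioo 0 (2 * π) := ⟨by linarith, by linarith⟩
  have hda : d - a ∈ Ioo 0 (2 * π) := ⟨by linarith, by linarith⟩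
  exact ((strictConvexOn_one_div_chord_rpow hα).add_lt_add_of_add_eq hcb hda
    ⟨by linarith, by linarith⟩ (by ring)).trans_eq (add_comm _ _)
end
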